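/- Suppose all candidates have unit weight (the weight of a committee is its cardinality). Let p ∈ (0,1), let Δ₁ be a finitely supported probability distribution over committees of size exactly 1, let Δ₂ be a finitely supported probability distribution over committees of size exactly 2, and let Δ_a = p·Δ₁ + (1−p)·Δ₂. Then there exists a finitely supported probability distribution Δ_d over committees of size at most 3 such that for every voter v, when S_d ∼ Δ_d and S_a ∼ Δ_a are drawn independently, Pr[S_a ≻_v S_d] < (2−p)/3. (Note (2−p)/3 = E_{S_a∼Δ_a}[|S_a|]/3.) -/

import Mathlib

attribute [local instance] Classical.propDecidable

open Finset

/-!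
Take `Δd = p · (Δ₁ ∪ Δ₁) + (1 − p) · Δ₂`, where `Δ₁ ∪ Δ₁` is the law of the union of two
independent draws from `Δ₁`. Expanding both mixtures splits a voter's probability of strictly
preferring `Sa` to `Sd` into four terms. A committee that beats `A ∪ B` beats both `A` and `B`, and
among three i.i.d. draws at most one beats the other two, so the `p²` term is at most `1/3`.
Replacing `A ∪ B` by `A` only helps `Sa`, so the two cross terms add up to at most
`Pr[S₂ ≻ S₁] + Pr[S₁ ≻ S₂] ≤ 1`, and the `(1 − p)²` term is at most `1/2` by symmetry. Altogether
the probability is at most `p²/3 + p(1 − p) + (1 − p)²/2 = (2 − p)/3 − (1 − p)²/6`.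
-/

noncomputable section

variable {ι α β γ : Type*}

def prodWeight (w : α → ℝ) (u : β → ℝ) (z : α × β) : ℝ :=
  w z.1 * u z.2

theorem prodWeight_add_smul_left (a b : ℝ) (w w' : α → ℝ) (u : β → ℝ) :
    prodWeight (a • w + b • w') u = a • prodWeight w u + b • prodWeight w' u := by
  ext z
  simp only [prodWeight, Pi.add_apply, Pi.smul_apply, smul_eq_mul]
  ring

theorem prodWeight_add_smul_right (a b : ℝ) (w : α → ℝ) (u u' : β → ℝ) :
    prodWeight w (a • u + b • u') = a • prodWeight w u + b • prodWeight w u' := by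
  ext z
  simp only [prodWeight, Pi.add_apply, Pi.smul_apply, smul_eq_mul]
  ring

def prob [Fintype ι] (w : ι → ℝ) (P : ι → Prop) : ℝ :=
  ∑ x, w x * if P x then 1 else 0

def pushforward [Fintype α] [DecidableEq β] (g : α → β) (w : α → ℝ) (y : β) : ℝ :=
  ∑ x, if g x = y then w x else 0

theorem exists_of_pushforward_ne_zero [Fintype α] [DecidableEq β] {g : α → β} {w : α → ℝ} {y : β}
    (h : pushforward g w y ≠ 0) : ∃ x, g x = y ∧ w x ≠ 0 := by
  obtain ⟨x, -, hx⟩ := exists_ne_zero_of_sum_ne_zero h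
  by_cases hxy : g x = y
  · exact ⟨x, hxy, by simpa [hxy] using hx⟩
  · simp [hxy] at hx

section Finite

variable [Fintype ι] [Fintype α] [Fintype β] [Fintype γ]

theorem prob_prodWeight (w : α → ℝ) (u : β → ℝ) (P : α × β → Prop) [DecidablePred P] :
    prob (prodWeight w u) P = ∑ x, ∑ y, w x * u y * if P (x, y) then 1 else 0 := by
  simp only [prob, prodWeight, Fintype.sum_prod_type]
  congr!

theorem prob_mono {w : ι → ℝ} (hw : ∀ x, 0 ≤ w x) {P Q : ι → Prop} (hPQ : ∀ x, P x → Q x) :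
    prob w P ≤ prob w Q := by
  refine sum_le_sum fun x _ => mul_le_mul_of_nonneg_left ?_ (hw x)
  by_cases hP : P x
  · simp [hP, hPQ x hP]
  · by_cases hQ : Q x <;> simp [hP, hQ]

theorem prob_add_prob_le_one {w : ι → ℝ} (hw : w ∈ stdSimplex ℝ ι) {P Q : ι → Prop}
    (hPQ : ∀ x, P x → ¬ Q x) : prob w P + prob w Q ≤ 1 := by
  rw [prob, prob, ← sum_add_distrib]
  refine (sum_le_sum fun x _ => ?_).trans hw.2.le
  rw [← mul_add]
  refine mul_le_of_le_one_right (hw.1 x) ?_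
  by_cases hP : P x
  · simp [hP, hPQ x hP]
  · by_cases hQ : Q x <;> simp [hP, hQ]

theorem prob_add_smul (a b : ℝ) (w w' : ι → ℝ) (P : ι → Prop) :
    prob (a • w + b • w') P = a * prob w P + b * prob w' P := by
  simp only [prob, Pi.add_apply, Pi.smul_apply, smul_eq_mul, mul_sum, ← sum_add_distrib]
  exact sum_congr rfl fun x _ => by ring

theorem prodWeight_mem_stdSimplex {w : α → ℝ} {u : β → ℝ} (hw : w ∈ stdSimplex ℝ α)
    (hu : u ∈ stdSimplex ℝ β) : prodWeight w u ∈ stdSimplex ℝ (α × β) :=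
  ⟨fun z => mul_nonneg (hw.1 z.1) (hu.1 z.2), by
    simp only [prodWeight, Fintype.sum_prod_type, ← mul_sum, hu.2, mul_one, hw.2]⟩

theorem prob_prodWeight_swap (w : α → ℝ) (u : β → ℝ) (P : β × α → Prop) :
    prob (prodWeight u w) P = prob (prodWeight w u) (fun z => P z.swap) := by
  rw [prob_prodWeight, prob_prodWeight, sum_comm]
  exact sum_congr rfl fun x _ => sum_congr rfl fun y _ => by rw [Prod.swap_prod_mk, mul_comm (w x)]


theorem prob_le_inv_of_perm {n : ℕ} (hn : 0 < n) (σ : Equiv.Perm ι) {w : ι → ℝ}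
    (hw : w ∈ stdSimplex ℝ ι) (hσ : ∀ x, w (σ x) = w x) {P : ι → Prop}
    (hP : ∀ x, ∑ k ∈ range n, (if P ((σ ^ k) x) then 1 else 0 : ℝ) ≤ 1) :
    prob w P ≤ 1 / n := by
  have hσpow : ∀ k x, w ((σ ^ k) x) = w x := by
    intro k
    induction k with
    | zero => simp
    | succ k ih => intro x; rw [pow_succ', Equiv.Perm.mul_apply, hσ, ih]
  have hrot : ∀ k, prob w (fun x => P ((σ ^ k) x)) = prob w P := fun k => by
    rw [prob, prob, ← Equiv.sum_comp (σ ^ k) (fun x => w x * if P x then 1 else 0)]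
    exact sum_congr rfl fun x _ => by rw [hσpow]
  have hn_mul : (n : ℝ) * prob w P ≤ 1 :=
    calc (n : ℝ) * prob w P = ∑ k ∈ range n, prob w (fun x => P ((σ ^ k) x)) := by simp [hrot]
      _ = ∑ x, w x * ∑ k ∈ range n, (if P ((σ ^ k) x) then 1 else 0 : ℝ) := by
          simp only [prob, mul_sum]
          exact sum_comm
      _ ≤ ∑ x, w x := sum_le_sum fun x _ => mul_le_of_le_one_right (hw.1 x) (hP x)
      _ = 1 := hw.2
  rw [le_div_iff₀ (by positivity)]
  linarith

theorem prob_beats_both_le_third {s : α → α → Prop} (hs : ∀ a b, s a b → ¬ s b a)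
    {w : α → ℝ} (hw : w ∈ stdSimplex ℝ α) :
    prob (prodWeight (prodWeight w w) w) (fun z => s z.2 z.1.1 ∧ s z.2 z.1.2) ≤ 1 / 3 := by
  -- rotating the three draws permutes the three pairwise exclusive events "draw i beats the others"
  let rot : Equiv.Perm ((α × α) × α) :=
    ⟨fun z => ((z.1.2, z.2), z.1.1), fun z => ((z.2, z.1.1), z.1.2), fun _ => rfl, fun _ => rfl⟩
  refine prob_le_inv_of_perm (n := 3) (by norm_num) rot
    (prodWeight_mem_stdSimplex (prodWeight_mem_stdSimplex hw hw) hw) (fun z => ?_) (fun z => ?_)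
  · simp only [rot, prodWeight, Equiv.coe_fn_mk]
    ring
  · simp only [sum_range_succ, range_zero, sum_empty, pow_succ, pow_zero, one_mul,
      Equiv.Perm.mul_apply, rot, Equiv.coe_fn_mk]
    have hca := hs z.1.1 z.2
    have hcb := hs z.1.2 z.2
    have hab := hs z.1.1 z.1.2
    split_ifs <;> norm_num <;> tauto

variable [DecidableEq β]

theorem sum_pushforward_mul (g : α → β) (w : α → ℝ) (f : β → ℝ) :
    ∑ y, pushforward g w y * f y = ∑ x, w x * f (g x) := by
  simp only [pushforward, sum_mul, ite_mul, zero_mul]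
  rw [sum_comm]
  simp

theorem pushforward_mem_stdSimplex (g : α → β) {w : α → ℝ} (hw : w ∈ stdSimplex ℝ α) :
    pushforward g w ∈ stdSimplex ℝ β := by
  refine ⟨fun y => sum_nonneg fun x _ => ?_, ?_⟩
  · split_ifs
    exacts [hw.1 x, le_rfl]
  · simpa [hw.2] using sum_pushforward_mul g w (fun _ => 1)

theorem prob_prodWeight_pushforward_left (g : α → β) (w : α → ℝ) (u : γ → ℝ)
    (P : β × γ → Prop) :
    prob (prodWeight (pushforward g w) u) P =
      prob (prodWeight w u) (fun z => P (g z.1, z.2)) := by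
  simp only [prob_prodWeight, mul_assoc, ← mul_sum]
  exact sum_pushforward_mul g w _

theorem pushforward_fst_prodWeight (w : β → ℝ) {u : γ → ℝ} (hu : ∑ y, u y = 1) :
    pushforward Prod.fst (prodWeight w u) = w := by
  ext x
  simp [pushforward, prodWeight, Fintype.sum_prod_type, ← mul_sum, hu]

theorem prob_beats_mixture_lt {s : β → β → Prop} (hs : ∀ a b, s a b → ¬ s b a)
    {g : β × β → β} (hg : ∀ S z, s S (g z) → s S z.1 ∧ s S z.2)
    {w₁ w₂ : β → ℝ} (hw₁ : w₁ ∈ stdSimplex ℝ β) (hw₂ : w₂ ∈ stdSimplex ℝ β)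
    {p : ℝ} (hp : p ∈ Set.Ioo (0 : ℝ) 1) :
    prob (prodWeight (p • pushforward g (prodWeight w₁ w₁) + (1 - p) • w₂)
      (p • w₁ + (1 - p) • w₂)) (fun z => s z.2 z.1) < (2 - p) / 3 := by
  set beats : β × β → Prop := fun z => s z.2 z.1
  have hw₁₁ := prodWeight_mem_stdSimplex hw₁ hw₁
  have h₁ : prob (prodWeight (pushforward g (prodWeight w₁ w₁)) w₁) beats ≤ 1 / 3 := by
    rw [prob_prodWeight_pushforward_left]
    exact (prob_mono (prodWeight_mem_stdSimplex hw₁₁ hw₁).1 fun z h => hg _ _ h).trans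
      (prob_beats_both_le_third hs hw₁)
  have h₂ : prob (prodWeight (pushforward g (prodWeight w₁ w₁)) w₂) beats ≤
      prob (prodWeight w₁ w₂) beats :=
    calc _ = prob (prodWeight (prodWeight w₁ w₁) w₂) (fun z => s z.2 (g z.1)) :=
          prob_prodWeight_pushforward_left _ _ _ _
      _ ≤ prob (prodWeight (prodWeight w₁ w₁) w₂) (fun z => s z.2 z.1.1) :=
          prob_mono (prodWeight_mem_stdSimplex hw₁₁ hw₂).1 fun z h => (hg _ _ h).1
      _ = prob (prodWeight (pushforward Prod.fst (prodWeight w₁ w₁)) w₂) beats :=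
          (prob_prodWeight_pushforward_left Prod.fst _ _ beats).symm
      _ = _ := by rw [pushforward_fst_prodWeight _ hw₁.2]
  have h₃ : prob (prodWeight w₁ w₂) beats + prob (prodWeight w₂ w₁) beats ≤ 1 := by
    rw [prob_prodWeight_swap w₁ w₂]
    exact prob_add_prob_le_one (prodWeight_mem_stdSimplex hw₁ hw₂) fun z => hs _ _
  have h₄ : prob (prodWeight w₂ w₂) beats ≤ 1 / 2 := by
    have := prob_add_prob_le_one (prodWeight_mem_stdSimplex hw₂ hw₂) (P := beats)
      (Q := fun z => beats z.swap) fun z => hs _ _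
    rw [← prob_prodWeight_swap w₂ w₂ beats] at this
    linarith
  rw [prodWeight_add_smul_left, prob_add_smul, prodWeight_add_smul_right,
    prodWeight_add_smul_right, prob_add_smul, prob_add_smul]
  obtain ⟨hp0, hp1⟩ := hp
  have hq0 : 0 < 1 - p := by linarith
  nlinarith [mul_le_mul_of_nonneg_left h₁ (mul_pos hp0 hp0).le,
    mul_le_mul_of_nonneg_left h₂ (mul_pos hp0 hq0).le,
    mul_le_mul_of_nonneg_left h₃ (mul_pos hp0 hq0).le,
    mul_le_mul_of_nonneg_left h₄ (mul_pos hq0 hq0).le, mul_pos hq0 hq0]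

end Finite

theorem and_not_of_and_not_of_trans {r : α → α → Prop} (htrans : ∀ a b c, r a b → r b c → r a c)
    {a b c : α} (hab : r a b ∧ ¬ r b a) (hbc : r b c) : r a c ∧ ¬ r c a :=
  ⟨htrans a b c hab.1 hbc, fun hca => hab.2 (htrans b c a hbc hca)⟩

end

theorem stmt_15_general
    {C N : Type} [Fintype C]
    (pref : N → Finset C → Finset C → Prop)
    (htrans : ∀ v S₁ S₂ S₃, pref v S₁ S₂ → pref v S₂ S₃ → pref v S₁ S₃)
    (hmono : ∀ v (S S' : Finset C), S ⊆ S' → pref v S' S)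
    (p : ℝ) (hp : p ∈ Set.Ioo (0 : ℝ) 1)
    (Δ₁ : Finset C → ℝ)
    (hΔ₁0 : ∀ S, 0 ≤ Δ₁ S) (hΔ₁1 : (∑ S : Finset C, Δ₁ S) = 1)
    (hΔ₁supp : ∀ S : Finset C, Δ₁ S ≠ 0 → S.card = 1)
    (Δ₂ : Finset C → ℝ)
    (hΔ₂0 : ∀ S, 0 ≤ Δ₂ S) (hΔ₂1 : (∑ S : Finset C, Δ₂ S) = 1)
    (hΔ₂supp : ∀ S : Finset C, Δ₂ S ≠ 0 → S.card = 2)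
    (Δa : Finset C → ℝ)
    (hΔa : ∀ S : Finset C, Δa S = p * Δ₁ S + (1 - p) * Δ₂ S) :
    ∃ Δd : Finset C → ℝ,
      (∀ S, 0 ≤ Δd S) ∧ (∑ S : Finset C, Δd S) = 1 ∧
      (∀ S : Finset C, Δd S ≠ 0 → S.card ≤ 3) ∧
      ∀ v : N,
        (∑ Sd : Finset C, ∑ Sa : Finset C,
            Δd Sd * Δa Sa * (if pref v Sa Sd ∧ ¬ pref v Sd Sa then (1 : ℝ) else 0))
          < (2 - p) / 3 := by
  have hw₁ : Δ₁ ∈ stdSimplex ℝ (Finset C) := ⟨hΔ₁0, hΔ₁1⟩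
  have hw₂ : Δ₂ ∈ stdSimplex ℝ (Finset C) := ⟨hΔ₂0, hΔ₂1⟩
  set U := pushforward (fun z : Finset C × Finset C => z.1 ∪ z.2) (prodWeight Δ₁ Δ₁)
  have hU := pushforward_mem_stdSimplex (fun z : Finset C × Finset C => z.1 ∪ z.2)
    (prodWeight_mem_stdSimplex hw₁ hw₁)
  obtain ⟨hd0, hd1⟩ := convex_stdSimplex ℝ (Finset C) hU hw₂ hp.1.le (by linarith [hp.2])
    (add_sub_cancel p 1)
  refine ⟨p • U + (1 - p) • Δ₂, hd0, hd1, fun S hS => ?_, fun v => ?_⟩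
  · by_cases hUS : U S = 0
    · have hΔ₂S : Δ₂ S ≠ 0 := fun h => hS (by simp [hUS, h])
      exact (hΔ₂supp S hΔ₂S).le.trans (by norm_num)
    · obtain ⟨z, rfl, hz⟩ := exists_of_pushforward_ne_zero hUS
      have h₁ := hΔ₁supp z.1 (left_ne_zero_of_mul hz)
      have h₂ := hΔ₁supp z.2 (right_ne_zero_of_mul hz)
      linarith [card_union_le z.1 z.2]
  · have hΔa' : Δa = p • Δ₁ + (1 - p) • Δ₂ := funext fun S => by simp [hΔa]
    have hbeats := prob_beats_mixture_lt (s := fun A B => pref v A B ∧ ¬ pref v B A)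
      (fun _ _ hab hba => hab.2 hba.1)
      (fun S z h => ⟨and_not_of_and_not_of_trans (htrans v) h (hmono v _ _ subset_union_left),
        and_not_of_and_not_of_trans (htrans v) h (hmono v _ _ subset_union_right)⟩) hw₁ hw₂ hp
    simpa only [prob_prodWeight, ← hΔa', U] using hbeats

/-- With unit-weight candidates, let `p ∈ (0,1)`, let `Δ₁` be a finitely
supported distribution over committees of size exactly `1`, let `Δ₂` be one over
committees of size exactly `2`, and let `Δa = p·Δ₁ + (1−p)·Δ₂`. Then there exists a
distribution `Δd` over committees of size at most `3` such that for every voter `v`,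
`Pr[Sa ≻_v Sd] < (2−p)/3` when `Sd ∼ Δd` and `Sa ∼ Δa` are drawn independently.
(`pref v S S'` means voter `v` weakly prefers `S` to `S'`.) -/
theorem stmt_15
    {C N : Type} [Fintype C] [Fintype N] [DecidableEq C]
    (pref : N → Finset C → Finset C → Prop)
    (htotal : ∀ v S S', pref v S S' ∨ pref v S' S)
    (htrans : ∀ v S₁ S₂ S₃, pref v S₁ S₂ → pref v S₂ S₃ → pref v S₁ S₃)
    (hmono : ∀ v (S S' : Finset C), S ⊆ S' → pref v S' S)
    (p : ℝ) (hp : p ∈ Set.Ioo (0 : ℝ) 1)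
    (Δ₁ : Finset C → ℝ)
    (hΔ₁0 : ∀ S, 0 ≤ Δ₁ S) (hΔ₁1 : (∑ S : Finset C, Δ₁ S) = 1)
    (hΔ₁supp : ∀ S : Finset C, Δ₁ S ≠ 0 → S.card = 1)
    (Δ₂ : Finset C → ℝ)
    (hΔ₂0 : ∀ S, 0 ≤ Δ₂ S) (hΔ₂1 : (∑ S : Finset C, Δ₂ S) = 1)
    (hΔ₂supp : ∀ S : Finset C, Δ₂ S ≠ 0 → S.card = 2)
    (Δa : Finset C → ℝ)
    (hΔa : ∀ S : Finset C, Δa S = p * Δ₁ S + (1 - p) * Δ₂ S) :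
    ∃ Δd : Finset C → ℝ,
      (∀ S, 0 ≤ Δd S) ∧ (∑ S : Finset C, Δd S) = 1 ∧
      (∀ S : Finset C, Δd S ≠ 0 → S.card ≤ 3) ∧
      ∀ v : N,
        (∑ Sd : Finset C, ∑ Sa : Finset C,
            Δd Sd * Δa Sa * (if pref v Sa Sd ∧ ¬ pref v Sd Sa then (1 : ℝ) else 0))
          < (2 - p) / 3 :=
  stmt_15_general pref htrans hmono p hp Δ₁ hΔ₁0 hΔ₁1 hΔ₁supp Δ₂ hΔ₂0 hΔ₂1 hΔ₂supp Δa hΔa
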